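/- arXiv:math/0102134 — 6 statements merged into one kernel-verified Lean document; each statement's English description precedes it below -/
import Mathlib

section
/- Let A be a C*-algebra and J a closed left ideal in A. Then JJ* is an essential two-sided ideal in A if and only if, for every a ∈ A, aJ = {0} implies a = 0. -/
/-- The closed linear span of the set of products `{s * t : s ∈ S, t ∈ T}` in `A`. -/
noncomputable def mulSpan {A : Type*} [NonUnitalCStarAlgebra A] (S T : Set A) : Submodule ℂ A :=
  (Submodule.span ℂ (Set.image2 (· * ·) S T)).topologicalClosure

/-- `JJ*`: the closed linear span of `{j * j'* : j, j' ∈ J}`. -/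
noncomputable def mulStarSpan {A : Type*} [NonUnitalCStarAlgebra A] (J : Submodule ℂ A) :
    Submodule ℂ A :=
  mulSpan (J : Set A) (star '' (J : Set A))

private lemma closure_span_aux {A : Type*} [NonUnitalCStarAlgebra A] (S : Set A)
    (f : A →L[ℂ] A) (M : Submodule ℂ A) (hM : IsClosed (M : Set A))
    (h : ∀ x ∈ S, f x ∈ M) :
    ∀ k ∈ (Submodule.span ℂ S).topologicalClosure, f k ∈ M := by
  have hle : (Submodule.span ℂ S).topologicalClosure ≤
      M.comap (f : A →ₗ[ℂ] A) := by
    apply Submodule.topologicalClosure_minimal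
    · exact Submodule.span_le.mpr h
    · exact hM.preimage f.continuous
  intro k hk
  exact hle hk

private lemma gen_mem {A : Type*} [NonUnitalCStarAlgebra A] (J : Submodule ℂ A)
    {j j' : A} (hj : j ∈ J) (hj' : j' ∈ J) : j * star j' ∈ mulStarSpan J := by
  apply Submodule.le_topologicalClosure _
  exact Submodule.subset_span ⟨j, hj, star j', ⟨j', hj', rfl⟩, rfl⟩

/-- Let `A` be a C*-algebra and `J` a closed left ideal in `A`.  Then `JJ*` is an essential
two-sided ideal in `A` if and only if, for every `a ∈ A`, `aJ = {0}` implies `a = 0`. -/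
theorem mulStarSpan_essential_iff
    {A : Type*} [NonUnitalCStarAlgebra A]
    (J : Submodule ℂ A)
    (hJc : IsClosed (J : Set A))
    (hJl : ∀ a : A, ∀ x ∈ J, a * x ∈ J) :
    (IsClosed ((mulStarSpan J : Submodule ℂ A) : Set A) ∧
      (∀ a : A, ∀ k ∈ mulStarSpan J, a * k ∈ mulStarSpan J) ∧
      (∀ a : A, ∀ k ∈ mulStarSpan J, k * a ∈ mulStarSpan J) ∧
      (∀ a : A, (∀ k ∈ mulStarSpan J, a * k = 0) → a = 0)) ↔
    (∀ a : A, (∀ j ∈ J, a * j = 0) → a = 0) := by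
  have hMclosed : IsClosed ((mulStarSpan J : Submodule ℂ A) : Set A) :=
    Submodule.isClosed_topologicalClosure _
  constructor
  · rintro ⟨-, -, -, hess⟩ a ha
    apply hess a
    have := closure_span_aux (Set.image2 (· * ·) (J : Set A) (star '' (J : Set A)))
      (ContinuousLinearMap.mul ℂ A a) ⊥ isClosed_singleton ?_
    · intro k hk
      have := this k hk
      simpa using this
    · rintro x ⟨j, hj, y, ⟨j', hj', rfl⟩, rfl⟩
      simp only [ContinuousLinearMap.mul_apply', Submodule.mem_bot]
      rw [← mul_assoc, ha j hj, zero_mul]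
  · intro hA
    refine ⟨hMclosed, ?_, ?_, ?_⟩
    · intro a
      apply closure_span_aux _ (ContinuousLinearMap.mul ℂ A a) _ hMclosed
      rintro x ⟨j, hj, y, ⟨j', hj', rfl⟩, rfl⟩
      simp only [ContinuousLinearMap.mul_apply']
      rw [← mul_assoc]
      exact gen_mem J (hJl a j hj) hj'
    · intro a
      apply closure_span_aux _ ((ContinuousLinearMap.mul ℂ A).flip a) _ hMclosed
      rintro x ⟨j, hj, y, ⟨j', hj', rfl⟩, rfl⟩
      simp only [ContinuousLinearMap.flip_apply, ContinuousLinearMap.mul_apply']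
      have : j * star j' * a = j * star (star a * j') := by
        rw [star_mul, star_star, mul_assoc]
      rw [this]
      exact gen_mem J hj (hJl (star a) j' hj')
    · intro a ha
      apply hA a
      intro j hj
      have h1 : a * (j * star j) = 0 := ha _ (gen_mem J hj hj)
      have h2 : (a * j) * star (a * j) = 0 := by
        rw [star_mul, ← mul_assoc, mul_assoc a j (star j), h1, zero_mul]
      have := CStarRing.norm_self_mul_star (x := a * j)
      rw [h2, norm_zero] at this
      have : ‖a * j‖ = 0 := by nlinarith [norm_nonneg (a * j)]
      simpa using norm_eq_zero.mp this
end

section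
/- Let A be a C*-algebra and J a closed left ideal in A. Then the condition 'for every a ∈ A, aJ = {0} implies a = 0' holds if and only if I ∩ J ≠ {0} for every non-zero closed right ideal I in A. -/
/-- Let `A` be a C*-algebra and `J` a closed left ideal in `A`.  Then
`∀ a ∈ A, aJ = {0} → a = 0` holds if and only if `I ∩ J ≠ {0}` for every non-zero
closed right ideal `I` in `A`. -/
theorem faithful_iff_inter_right_ideal_ne_bot
    {A : Type*} [NonUnitalCStarAlgebra A]
    (J : Submodule ℂ A)
    (hJc : IsClosed (J : Set A))
    (hJl : ∀ a : A, ∀ x ∈ J, a * x ∈ J) :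
    (∀ a : A, (∀ j ∈ J, a * j = 0) → a = 0) ↔
    (∀ I : Submodule ℂ A, IsClosed (I : Set A) → (∀ x ∈ I, ∀ a : A, x * a ∈ I) →
      I ≠ ⊥ → ∃ x : A, x ∈ I ∧ x ∈ J ∧ x ≠ 0) := by
  constructor
  · intro h1 I _ hIr hne
    by_contra hcon
    push_neg at hcon
    apply hne
    rw [Submodule.eq_bot_iff]
    intro x hxI
    apply h1
    intro j hj
    exact hcon _ (hIr x hxI j) (hJl x j hj)
  · intro h2 a ha
    by_contra ha0
    set I : Submodule ℂ A :=
      { carrier := {x | ∀ j ∈ J, x * j = 0}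
        add_mem' := by
          intro p q hp hq j hj
          simp only [Set.mem_setOf_eq] at *
          rw [add_mul, hp j hj, hq j hj, add_zero]
        zero_mem' := by intro j hj; simp
        smul_mem' := by
          intro c x hx j hj
          simp only [Set.mem_setOf_eq] at *
          rw [smul_mul_assoc, hx j hj, smul_zero] } with hIdef
    have hIc : IsClosed (I : Set A) := by
      have : (I : Set A) = ⋂ j ∈ J, {x : A | x * j = 0} := by
        ext x; simp [hIdef, Set.mem_iInter]
      rw [this]
      refine isClosed_biInter fun j _ => ?_
      exact isClosed_eq (by fun_prop) continuous_const
    have hIr : ∀ x ∈ I, ∀ b : A, x * b ∈ I := by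
      intro x hx b j hj
      have : b * j ∈ J := hJl b j hj
      have := hx (b * j) this
      rw [mul_assoc]
      exact this
    have hne : I ≠ ⊥ := by
      intro hbot
      apply ha0
      have : a ∈ I := ha
      rw [hbot] at this
      simpa using this
    obtain ⟨x, hxI, hxJ, hx0⟩ := h2 I hIc hIr hne
    apply hx0
    have h1 : x * (star x * x) = 0 := hxI _ (hJl (star x) x hxJ)
    have h2 : (x * star x) * (x * star x) = 0 := by
      calc (x * star x) * (x * star x) = x * (star x * x) * star x := by
            simp [mul_assoc]
        _ = 0 := by rw [h1, zero_mul]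
    have h3 : x * star x = 0 := by
      have hn : ‖x * star x‖ * ‖x * star x‖ = 0 := by
        rw [← CStarRing.norm_star_mul_self (x := x * star x)]
        simp [star_mul, h2]
      have := mul_self_eq_zero.mp hn
      exact norm_eq_zero.mp this
    have : ‖x‖ * ‖x‖ = 0 := by
      rw [← CStarRing.norm_self_mul_star, h3, norm_zero]
    exact norm_eq_zero.mp (mul_self_eq_zero.mp this)
end

section
/- Let A be a C*-algebra and J a closed left ideal in A. Then the condition 'for every a ∈ A, aJ = {0} implies a = 0' holds if and only if K ∩ J ≠ {0} for every non-zero closed two-sided ideal K in A. -/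
/-- Let `A` be a C*-algebra and `J` a closed left ideal in `A`.  Then
`∀ a ∈ A, aJ = {0} → a = 0` holds if and only if `K ∩ J ≠ {0}` for every non-zero
closed two-sided ideal `K` in `A`. -/
theorem faithful_iff_inter_two_sided_ideal_ne_bot
    {A : Type*} [NonUnitalCStarAlgebra A]
    (J : Submodule ℂ A)
    (hJc : IsClosed (J : Set A))
    (hJl : ∀ a : A, ∀ x ∈ J, a * x ∈ J) :
    (∀ a : A, (∀ j ∈ J, a * j = 0) → a = 0) ↔
    (∀ K : Submodule ℂ A, IsClosed (K : Set A) → (∀ a : A, ∀ x ∈ K, a * x ∈ K) →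
      (∀ x ∈ K, ∀ a : A, x * a ∈ K) → K ≠ ⊥ → ∃ x : A, x ∈ K ∧ x ∈ J ∧ x ≠ 0) := by
  constructor
  · intro h K _hKc _hKl hKr hK
    by_contra hcon
    push_neg at hcon
    apply hK
    rw [Submodule.eq_bot_iff]
    intro a ha
    apply h a
    intro j hj
    by_contra hne
    exact hne (hcon (a * j) (hKr a ha j) (hJl a j hj))
  · intro h a ha
    by_contra hane
    -- build the two-sided ideal K = {x | xJ = 0 and x* J = 0}
    set K : Submodule ℂ A :=
      { carrier := {x | (∀ j ∈ J, x * j = 0) ∧ (∀ j ∈ J, star x * j = 0)}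
        add_mem' := by
          rintro x y ⟨hx1, hx2⟩ ⟨hy1, hy2⟩
          refine ⟨fun j hj => ?_, fun j hj => ?_⟩
          · rw [add_mul, hx1 j hj, hy1 j hj, add_zero]
          · rw [star_add, add_mul, hx2 j hj, hy2 j hj, add_zero]
        zero_mem' := by
          refine ⟨fun j hj => zero_mul j, fun j hj => ?_⟩
          rw [star_zero, zero_mul]
        smul_mem' := by
          rintro c x ⟨hx1, hx2⟩
          refine ⟨fun j hj => ?_, fun j hj => ?_⟩
          · rw [smul_mul_assoc, hx1 j hj, smul_zero]
          · rw [star_smul, smul_mul_assoc, hx2 j hj, smul_zero]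
      } with hKdef
    have hKmem : ∀ x : A, x ∈ K ↔ (∀ j ∈ J, x * j = 0) ∧ (∀ j ∈ J, star x * j = 0) := by
      intro x; rfl
    have hKc : IsClosed (K : Set A) := by
      have : (K : Set A) = (⋂ j ∈ J, {x : A | x * j = 0}) ∩
          (⋂ j ∈ J, {x : A | star x * j = 0}) := by
        ext x
        simp only [Set.mem_inter_iff, Set.mem_iInter, Set.mem_setOf_eq, SetLike.mem_coe, hKmem]
      rw [this]
      apply IsClosed.inter
      · exact isClosed_biInter fun j _ =>
          isClosed_eq (continuous_id.mul continuous_const) continuous_const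
      · exact isClosed_biInter fun j _ =>
          isClosed_eq ((continuous_star).mul continuous_const) continuous_const
    have hKl : ∀ b : A, ∀ x ∈ K, b * x ∈ K := by
      intro b x hx
      rw [hKmem] at hx ⊢
      refine ⟨fun j hj => ?_, fun j hj => ?_⟩
      · rw [mul_assoc, hx.1 j hj, mul_zero]
      · rw [star_mul, mul_assoc]
        rw [hx.2 (star b * j) (hJl (star b) j hj)]
    have hKr : ∀ x ∈ K, ∀ b : A, x * b ∈ K := by
      intro x hx b
      rw [hKmem] at hx ⊢
      refine ⟨fun j hj => ?_, fun j hj => ?_⟩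
      · rw [mul_assoc]
        exact hx.1 (b * j) (hJl b j hj)
      · rw [star_mul, mul_assoc, hx.2 j hj, mul_zero]
    have hKne : K ≠ ⊥ := by
      intro hbot
      have hmem : star a * a ∈ K := by
        rw [hKmem]
        refine ⟨fun j hj => ?_, fun j hj => ?_⟩
        · rw [mul_assoc, ha j hj, mul_zero]
        · rw [star_mul, star_star, mul_assoc, ha j hj, mul_zero]
      rw [hbot, Submodule.mem_bot] at hmem
      exact hane (by simpa using CStarRing.star_mul_self_eq_zero_iff a |>.mp hmem)
    obtain ⟨x, hxK, hxJ, hxne⟩ := h K hKc hKl hKr hKne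
    rw [hKmem] at hxK
    have : star x * x = 0 := hxK.2 x hxJ
    exact hxne ((CStarRing.star_mul_self_eq_zero_iff x).mp this)
end

section
/- Let A be a C*-algebra and J a closed left ideal in A. Then for every n ∈ ℕ, J is an essential left ideal in A if and only if Mₙ(J) is an essential left ideal in Mₙ(A). In particular, if Mₙ(J) is an essential left ideal in Mₙ(A) for some n, then Mₘ(J) is an essential left ideal in Mₘ(A) for all m ∈ ℕ. -/
lemma matrix_ess_iff_aux
    {A : Type*} [NonUnitalCStarAlgebra A]
    (J : Submodule ℂ A) (n : ℕ) (hn : 0 < n) :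
    (∀ a : A, (∀ j ∈ J, a * j = 0) → a = 0) ↔
      (∀ a : Matrix (Fin n) (Fin n) A,
        (∀ x : Matrix (Fin n) (Fin n) A, (∀ i j, x i j ∈ J) → a * x = 0) → a = 0) := by
  constructor
  · intro h a ha
    ext i k
    apply h
    intro j hj
    have hx : ∀ i' j', (Matrix.single k k j : Matrix (Fin n) (Fin n) A) i' j' ∈ J := by
      intro i' j'
      by_cases hc : k = i' ∧ k = j'
      · obtain ⟨h1, h2⟩ := hc; subst h1; subst h2
        simpa using hj
      · rw [Matrix.single_apply_of_ne (h := hc)]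
        exact J.zero_mem
    have := ha (Matrix.single k k j) hx
    have h2 := congrFun (congrFun this i) k
    simpa using h2
  · intro h a ha
    have z : Fin n := ⟨0, hn⟩
    have key : (Matrix.single z z a : Matrix (Fin n) (Fin n) A) = 0 := by
      apply h
      intro x hx
      ext i j
      by_cases hc : i = z
      · subst hc
        rw [Matrix.single_mul_apply_same]
        simpa using ha (x i j) (hx i j)
      · rw [Matrix.single_mul_apply_of_ne (h := hc)]
        simp
    have := congrFun (congrFun key z) z
    simpa using this

/-- Let `A` be a C*-algebra and `J` a closed left ideal in `A`.  Then for every `n ≥ 1`,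
`J` is an essential left ideal in `A` (i.e. `aJ = {0}` implies `a = 0`) if and only if
`Mₙ(J)` is an essential left ideal in `Mₙ(A)`.  In particular, if `Mₙ(J)` is an essential
left ideal in `Mₙ(A)` for some `n ≥ 1`, then `Mₘ(J)` is an essential left ideal in `Mₘ(A)`
for all `m ≥ 1`. -/
theorem matrix_essential_left_ideal_iff
    {A : Type*} [NonUnitalCStarAlgebra A]
    (J : Submodule ℂ A)
    (hJc : IsClosed (J : Set A))
    (hJl : ∀ a : A, ∀ x ∈ J, a * x ∈ J) :
    (∀ n : ℕ, 0 < n →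
      ((∀ a : A, (∀ j ∈ J, a * j = 0) → a = 0) ↔
        (∀ a : Matrix (Fin n) (Fin n) A,
          (∀ x : Matrix (Fin n) (Fin n) A, (∀ i j, x i j ∈ J) → a * x = 0) → a = 0))) ∧
    ((∃ n : ℕ, 0 < n ∧
        ∀ a : Matrix (Fin n) (Fin n) A,
          (∀ x : Matrix (Fin n) (Fin n) A, (∀ i j, x i j ∈ J) → a * x = 0) → a = 0) →
      ∀ m : ℕ, 0 < m →
        ∀ a : Matrix (Fin m) (Fin m) A,
          (∀ x : Matrix (Fin m) (Fin m) A, (∀ i j, x i j ∈ J) → a * x = 0) → a = 0) := by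
  refine ⟨fun n hn => matrix_ess_iff_aux J n hn, ?_⟩
  rintro ⟨n, hn, h⟩ m hm
  exact (matrix_ess_iff_aux J m hm).mp ((matrix_ess_iff_aux J n hn).mpr h)
end

section
/- Let B be a C*-algebra and A ⊆ B an essential closed two-sided ideal of B. Then for every n ∈ ℕ and every X ∈ Mₙ(B), ‖X‖ = sup { ‖XC‖ : C an n×1 column matrix with entries in A, ‖C‖ ≤ 1 }, where the norm of a column C and of the column XC is the canonical C*-norm on n×1 matrices over B. -/
set_option maxHeartbeats 1000000
set_option synthInstance.maxHeartbeats 400000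

open UniformSpace

/-- Bundled C*-norm data on a complex star algebra. -/
structure CNorm (E : Type*) [NonUnitalRing E] [Module ℂ E] [StarRing E] where
  toFun : E → ℝ
  add_le' : ∀ x y, toFun (x + y) ≤ toFun x + toFun y
  smul' : ∀ (c : ℂ) (x), toFun (c • x) = ‖c‖ * toFun x
  eq_zero' : ∀ x, toFun x = 0 ↔ x = 0
  mul_le' : ∀ x y, toFun (x * y) ≤ toFun x * toFun y
  cstar' : ∀ x, toFun (star x * x) = toFun x ^ 2

namespace CNorm

variable {E : Type*} [NonUnitalRing E] [Module ℂ E] [StarRing E] (p : CNorm E)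

lemma map_zero : p.toFun 0 = 0 := by
  have h : ((0 : ℂ) • (0 : E)) = 0 := by simp
  have := p.smul' 0 0
  rw [h] at this
  simpa using this

lemma map_neg (x : E) : p.toFun (-x) = p.toFun x := by
  have h : ((-1 : ℂ) • x) = -x := by simp
  have := p.smul' (-1) x
  rw [h] at this
  simpa using this

lemma nonneg (x : E) : 0 ≤ p.toFun x := by
  have h := p.add_le' x (-x)
  rw [add_neg_cancel, p.map_zero, p.map_neg] at h
  linarith

lemma map_star (x : E) : p.toFun (star x) = p.toFun x := by
  have key : ∀ y : E, p.toFun y ≤ p.toFun (star y) := by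
    intro y
    rcases eq_or_lt_of_le (p.nonneg y) with h0 | h0
    · rw [← h0]; exact p.nonneg _
    · have h := p.cstar' y
      have h2 : p.toFun y ^ 2 ≤ p.toFun (star y) * p.toFun y := h ▸ p.mul_le' (star y) y
      rw [pow_two] at h2
      exact le_of_mul_le_mul_right h2 h0
  have h1 := key x
  have h2 := key (star x)
  rw [star_star] at h2
  linarith

end CNorm

/-- Type synonym of `E` equipped with the norm `p`. -/
def CNorm.Syn {E : Type*} [NonUnitalRing E] [Module ℂ E] [StarRing E] (p : CNorm E) : Type _ := E

namespace CNorm.Syn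

variable {E : Type*} [NonUnitalRing E] [Module ℂ E] [StarRing E]
  [IsScalarTower ℂ E E] [SMulCommClass ℂ E E] [StarModule ℂ E] (p : CNorm E)

instance : NonUnitalRing (Syn p) := inferInstanceAs (NonUnitalRing E)
instance : StarRing (Syn p) := inferInstanceAs (StarRing E)
instance : Module ℂ (Syn p) := inferInstanceAs (Module ℂ E)
instance : IsScalarTower ℂ (Syn p) (Syn p) := inferInstanceAs (IsScalarTower ℂ E E)
instance : SMulCommClass ℂ (Syn p) (Syn p) := inferInstanceAs (SMulCommClass ℂ E E)
instance : StarModule ℂ (Syn p) := inferInstanceAs (StarModule ℂ E)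

/-- the identification of `E` with `Syn p`. -/
def mk : E ≃ Syn p := Equiv.refl _

noncomputable instance : NormedAddCommGroup (Syn p) :=
  AddGroupNorm.toNormedAddCommGroup
    { toFun := fun x => p.toFun ((mk p).symm x)
      map_zero' := p.map_zero
      add_le' := p.add_le'
      neg' := p.map_neg
      eq_zero_of_map_eq_zero' := fun x h => (p.eq_zero' x).mp h }

lemma norm_def (x : Syn p) : ‖x‖ = p.toFun ((mk p).symm x) := rfl

noncomputable instance : NonUnitalNormedRing (Syn p) :=
  { (inferInstance : NormedAddCommGroup (Syn p)),
    (inferInstance : NonUnitalRing (Syn p)) with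
    norm_mul_le := p.mul_le' }

noncomputable instance : NormedSpace ℂ (Syn p) where
  norm_smul_le c x := le_of_eq (p.smul' c ((mk p).symm x))

instance : CStarRing (Syn p) where
  norm_mul_self_le x := le_of_eq <| by
    rw [norm_def, norm_def, ← pow_two]
    exact (p.cstar' ((mk p).symm x)).symm

end CNorm.Syn

namespace CNorm

variable {E : Type*} [NonUnitalRing E] [Module ℂ E] [StarRing E]
  [IsScalarTower ℂ E E] [SMulCommClass ℂ E E] [StarModule ℂ E] (p : CNorm E)

/-- The unitization of the synonym. -/
abbrev Unit := Unitization ℂ (Syn p)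

/-- The completion of the unitization: a C*-algebra. -/
abbrev Comp := Completion (Unit p)

noncomputable instance instUnitNormedRing : NormedRing (Unit p) := Unitization.instNormedRing
noncomputable instance instCompNormedRing : NormedRing (Comp p) := inferInstance
instance instCompT2 : T2Space (Comp p) := inferInstance
instance instCompContinuousMul : ContinuousMul (Comp p) := inferInstance
instance instUnitUCSMul : UniformContinuousConstSMul ℂ (Unit p) := inferInstance

lemma uc_star : UniformContinuous (star : Unit p → Unit p) :=
  (AddMonoidHomClass.isometry_of_norm (starAddEquiv : Unit p ≃+ Unit p)
    norm_star).uniformContinuous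

lemma map_star_coe (x : Unit p) :
    Completion.map (star : Unit p → Unit p) (x : Comp p) = ((star x : Unit p) : Comp p) :=
  Completion.map_coe (uc_star p) x

noncomputable instance : StarRing (Comp p) where
  star := Completion.map (star : Unit p → Unit p)
  star_involutive x := by
    refine Completion.induction_on x
      (isClosed_eq (Completion.continuous_map.comp Completion.continuous_map) continuous_id)
      fun a => ?_
    show Completion.map _ (Completion.map _ _) = _
    rw [map_star_coe, map_star_coe, star_star]
  star_mul x y := by
    refine Completion.induction_on₂ x y (isClosed_eq ?_ ?_) fun a b => ?_
    · exact Completion.continuous_map.comp (continuous_mul.comp continuous_id)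
    · exact ((Completion.continuous_map (f := (star : Unit p → Unit p))).comp continuous_snd).mul
        ((Completion.continuous_map (f := (star : Unit p → Unit p))).comp continuous_fst)
    · show Completion.map _ (_ * _) = Completion.map _ _ * Completion.map _ _
      rw [← Completion.coe_mul, map_star_coe, map_star_coe, map_star_coe, ← Completion.coe_mul,
        star_mul]
  star_add x y := by
    refine Completion.induction_on₂ x y (isClosed_eq ?_ ?_) fun a b => ?_
    · exact Completion.continuous_map.comp continuous_add
    · exact ((Completion.continuous_map (f := (star : Unit p → Unit p))).comp continuous_fst).add
        ((Completion.continuous_map (f := (star : Unit p → Unit p))).comp continuous_snd)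
    · show Completion.map _ (_ + _) = Completion.map _ _ + Completion.map _ _
      rw [← Completion.coe_add, map_star_coe, map_star_coe, map_star_coe, ← Completion.coe_add,
        star_add]

lemma star_coe' (x : Unit p) : star ((x : Comp p)) = ((star x : Unit p) : Comp p) :=
  map_star_coe p x

lemma continuous_star' : Continuous (star : Comp p → Comp p) :=
  Completion.continuous_map

instance : NormedStarGroup (Comp p) where
  norm_star_le x := le_of_eq <| by
    refine Completion.induction_on x
      (isClosed_eq (continuous_star' p).norm continuous_norm) fun a => ?_
    rw [star_coe', Completion.norm_coe, Completion.norm_coe, norm_star]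

instance : CStarRing (Comp p) where
  norm_mul_self_le x := by
    refine le_of_eq (Eq.symm ?_)
    refine Completion.induction_on x (isClosed_eq ?_ ?_) fun a => ?_
    · exact ((continuous_star' p).mul continuous_id).norm
    · exact continuous_norm.mul continuous_norm
    · rw [star_coe', ← Completion.coe_mul, Completion.norm_coe, Completion.norm_coe]
      exact CStarRing.norm_star_mul_self

instance : SMulCommClass ℂ (Comp p) (Comp p) where
  smul_comm c x y := by
    refine Completion.induction_on₂ x y (isClosed_eq ?_ ?_) fun a b => ?_
    · exact (continuous_const_smul c).comp continuous_mul
    · exact continuous_fst.mul ((continuous_const_smul c).comp continuous_snd)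
    · show c • ((a : Comp p) * b) = (a : Comp p) * (c • (b : Comp p))
      rw [← Completion.coe_mul, ← Completion.coe_smul, ← Completion.coe_smul,
        ← Completion.coe_mul]
      exact congrArg _ (mul_smul_comm c (a : Unit p) b).symm

instance : IsScalarTower ℂ (Comp p) (Comp p) where
  smul_assoc c x y := by
    refine Completion.induction_on₂ x y (isClosed_eq ?_ ?_) fun a b => ?_
    · exact ((continuous_const_smul c).comp continuous_fst).mul continuous_snd
    · exact (continuous_const_smul c).comp continuous_mul
    · show (c • (a : Comp p)) * b = c • ((a : Comp p) * b)
      rw [← Completion.coe_smul, ← Completion.coe_mul, ← Completion.coe_mul,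
        ← Completion.coe_smul]
      exact congrArg _ (smul_mul_assoc c (a : Unit p) b)

instance : StarModule ℂ (Comp p) where
  star_smul c x := by
    refine Completion.induction_on x (isClosed_eq ?_ ?_) fun a => ?_
    · exact (continuous_star' p).comp (continuous_const_smul c)
    · exact (continuous_const_smul (star c)).comp (continuous_star' p)
    · rw [← Completion.coe_smul, star_coe', star_coe', ← Completion.coe_smul, star_smul]

noncomputable instance : NonUnitalCStarAlgebra (Comp p) := {}

end CNorm

/-- **Uniqueness of C*-norms**: a C*-norm on a C*-algebra coincides with the norm. -/
theorem CNorm.eq_norm {E : Type*} [NonUnitalCStarAlgebra E] (p : CNorm E) (x : E) :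
    p.toFun x = ‖x‖ := by
  let f : E → Comp p := fun b => (((Syn.mk p b : Syn p) : Unit p) : Comp p)
  have f_smul : ∀ (c : ℂ) (b : E), f (c • b) = c • f b := fun c b => by
    show ((((Syn.mk p (c • b)) : Unit p)) : Comp p) = c • _
    rw [show Syn.mk p (c • b) = c • Syn.mk p b from rfl, Unitization.inr_smul,
      Completion.coe_smul]
  have f_zero : f 0 = 0 := by
    show ((((Syn.mk p (0 : E)) : Unit p)) : Comp p) = 0
    rw [show Syn.mk p (0 : E) = 0 from rfl, Unitization.inr_zero, Completion.coe_zero]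
  have f_add : ∀ (a b : E), f (a + b) = f a + f b := fun a b => by
    show ((((Syn.mk p (a + b)) : Unit p)) : Comp p) = _ + _
    rw [show Syn.mk p (a + b) = Syn.mk p a + Syn.mk p b from rfl, Unitization.inr_add,
      Completion.coe_add]
  have f_mul : ∀ (a b : E), f (a * b) = f a * f b := fun a b => by
    show ((((Syn.mk p (a * b)) : Unit p)) : Comp p) = _ * _
    rw [show Syn.mk p (a * b) = Syn.mk p a * Syn.mk p b from rfl, Unitization.inr_mul,
      Completion.coe_mul]
  have f_star : ∀ (a : E), f (star a) = star (f a) := fun a => by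
    show ((((Syn.mk p (star a)) : Unit p)) : Comp p) = star _
    rw [show Syn.mk p (star a) = star (Syn.mk p a) from rfl, Unitization.inr_star,
      ← star_coe']
  let φ : E →⋆ₙₐ[ℂ] Comp p :=
    { toFun := f
      map_smul' := fun c b => f_smul c b
      map_zero' := f_zero
      map_add' := f_add
      map_mul' := f_mul
      map_star' := f_star }
  have hinj : Function.Injective φ := by
    intro a b hab
    have h1 : (((Syn.mk p a : Syn p) : Unit p) : Comp p)
        = (((Syn.mk p b : Syn p) : Unit p) : Comp p) := hab
    have h2 := Completion.coe_injective (Unit p) h1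
    exact (Syn.mk p).injective (Unitization.inr_injective h2)
  have key := NonUnitalStarAlgHom.norm_map φ hinj x
  calc p.toFun x = ‖(Syn.mk p x : Syn p)‖ := (Syn.norm_def p _).symm
    _ = ‖((Syn.mk p x : Syn p) : Unit p)‖ := (Unitization.norm_inr _).symm
    _ = ‖φ x‖ := (Completion.norm_coe _).symm
    _ = ‖x‖ := key

/-- `N` is a C*-norm on the `*`-algebra `Mₙ(B)`.  Since a `*`-algebra admitting a complete
C*-norm (as `Mₙ(B)` does) has a unique C*-norm, this characterizes the canonical C*-norm
on `Mₙ(B)`. -/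
def IsCStarNorm {B : Type*} [NonUnitalCStarAlgebra B] {n : ℕ}
    (N : Matrix (Fin n) (Fin n) B → ℝ) : Prop :=
  (∀ x y, N (x + y) ≤ N x + N y) ∧
  (∀ (c : ℂ) (x), N (c • x) = ‖c‖ * N x) ∧
  (∀ x, N x = 0 ↔ x = 0) ∧
  (∀ x y, N (x * y) ≤ N x * N y) ∧
  (∀ x, N (star x * x) = N x ^ 2)

/-- The `n×n` matrix whose zeroth column is `C` and whose other entries vanish; this is the
canonical embedding of `n×1` column matrices into `Mₙ(B)`. -/
def colMatrix {B : Type*} [NonUnitalCStarAlgebra B] {n : ℕ} (C : Fin n → B) :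
    Matrix (Fin n) (Fin n) B :=
  Matrix.of fun i j => if (j : ℕ) = 0 then C i else 0

section MatrixLemmas

variable {B : Type*} [NonUnitalCStarAlgebra B] {n : ℕ}

open Matrix

lemma stdB_star (i j : Fin n) (a : B) :
    star (Matrix.single i j a) = Matrix.single j i (star a) := by
  ext k l
  rw [Matrix.star_apply]
  simp only [Matrix.single, Matrix.of_apply]
  by_cases h1 : i = l <;> by_cases h2 : j = k <;> simp [h1, h2]

lemma stdB_eq_zero {i j : Fin n} {a : B} (h : Matrix.single i j a = 0) : a = 0 := by
  have := congrFun (congrFun h i) j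
  simpa [Matrix.single] using this

lemma stdB_sandwich (i j : Fin n) (u v : B) (X : Matrix (Fin n) (Fin n) B) :
    Matrix.single i i u * X * Matrix.single j j v
      = Matrix.single i j (u * X i j * v) := by
  ext a b
  simp only [Matrix.mul_apply, Matrix.single, Matrix.of_apply, ite_mul, mul_ite,
    zero_mul, mul_zero]
  by_cases ha : i = a <;> by_cases hb : j = b
  · subst ha; subst hb
    simp [Finset.sum_ite_eq, Finset.sum_ite_eq']
  all_goals simp [ha, hb]

lemma colMatrix_add (C D : Fin n → B) : colMatrix (C + D) = colMatrix C + colMatrix D := by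
  ext i j
  simp only [colMatrix, Matrix.of_apply, Matrix.add_apply, Pi.add_apply]
  split_ifs <;> simp

lemma colMatrix_smul (c : ℂ) (C : Fin n → B) : colMatrix (c • C) = c • colMatrix C := by
  ext i j
  simp only [colMatrix, Matrix.of_apply, Matrix.smul_apply, Pi.smul_apply]
  split_ifs <;> simp

lemma colMatrix_zero : colMatrix (0 : Fin n → B) = 0 := by
  ext i j
  simp only [colMatrix, Matrix.of_apply, Matrix.zero_apply, Pi.zero_apply]
  split_ifs <;> simp

lemma colMatrix_eq_zero {C : Fin n → B} (hn : 0 < n) (h : colMatrix C = 0) : C = 0 := by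
  funext i
  have := congrFun (congrFun h i) ⟨0, hn⟩
  simpa [colMatrix] using this

lemma mul_colMatrix (X : Matrix (Fin n) (Fin n) B) (C : Fin n → B) :
    X * colMatrix C = colMatrix (X.mulVec C) := by
  ext i j
  simp only [colMatrix, Matrix.mul_apply, Matrix.of_apply]
  split_ifs with h
  · rfl
  · simp

end MatrixLemmas

section MatrixCNorm

variable {B : Type*} [NonUnitalCStarAlgebra B] {n : ℕ}
  (p : CNorm (Matrix (Fin n) (Fin n) B))

open Matrix

/-- the C*-norm on `B` induced by a diagonal embedding into `Mₙ(B)`. -/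
noncomputable def diagCNorm (k : Fin n) : CNorm B where
  toFun b := p.toFun (Matrix.single k k b)
  add_le' a b := by
    rw [Matrix.single_add]; exact p.add_le' _ _
  smul' c b := by
    rw [← Matrix.smul_single]; exact p.smul' _ _
  eq_zero' b := by
    rw [p.eq_zero']
    exact ⟨fun h => stdB_eq_zero h, fun h => by rw [h]; ext i j; simp [Matrix.single]⟩
  mul_le' a b := by
    rw [← Matrix.single_mul_single_same (c := a) k k k b]
    exact p.mul_le' _ _
  cstar' b := by
    rw [← p.cstar' (Matrix.single k k b), stdB_star, Matrix.single_mul_single_same]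

lemma p_diag (k : Fin n) (b : B) : p.toFun (Matrix.single k k b) = ‖b‖ :=
  (diagCNorm p k).eq_norm b

lemma p_stdB (i j : Fin n) (b : B) : p.toFun (Matrix.single i j b) = ‖b‖ := by
  have h1 := p.cstar' (Matrix.single i j b)
  rw [stdB_star, Matrix.single_mul_single_same, p_diag, CStarRing.norm_star_mul_self] at h1
  rw [← Real.sqrt_sq (p.nonneg (Matrix.single i j b)), ← h1,
    Real.sqrt_mul_self (norm_nonneg b)]

lemma p_le_sum (X : Matrix (Fin n) (Fin n) B) :
    p.toFun X ≤ ∑ i : Fin n, ∑ j : Fin n, ‖X i j‖ := by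
  conv_lhs => rw [Matrix.matrix_eq_sum_single X]
  refine le_trans (Finset.le_sum_of_subadditive p.toFun p.map_zero.le p.add_le' _ _) ?_
  refine Finset.sum_le_sum fun i _ => ?_
  refine le_trans (Finset.le_sum_of_subadditive p.toFun p.map_zero.le p.add_le' _ _) ?_
  exact Finset.sum_le_sum fun j _ => le_of_eq (p_stdB p i j _)

lemma entry_le_p (X : Matrix (Fin n) (Fin n) B) (i j : Fin n) : ‖X i j‖ ≤ p.toFun X := by
  set x := X i j with hx
  rcases eq_or_ne x 0 with h0 | h0
  · rw [h0, norm_zero]; exact p.nonneg X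
  · have hsand := stdB_sandwich i j (star x) (star x * x) X
    have hnorm : ‖star x * X i j * (star x * x)‖ = ‖x‖ ^ 4 := by
      rw [← hx]
      calc ‖star x * x * (star x * x)‖ = ‖star (star x * x) * (star x * x)‖ := by
            rw [IsSelfAdjoint.star_mul_self x]
        _ = ‖star x * x‖ * ‖star x * x‖ := CStarRing.norm_star_mul_self
        _ = (‖x‖ * ‖x‖) * (‖x‖ * ‖x‖) := by rw [CStarRing.norm_star_mul_self]
        _ = ‖x‖ ^ 4 := by ring
    have hle : p.toFun (Matrix.single i j (star x * X i j * (star x * x)))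
        ≤ ‖x‖ * p.toFun X * (‖x‖ * ‖x‖) := by
      rw [← hsand]
      calc p.toFun (Matrix.single i i (star x) * X * Matrix.single j j (star x * x))
          ≤ p.toFun (Matrix.single i i (star x) * X)
            * p.toFun (Matrix.single j j (star x * x)) := p.mul_le' _ _
        _ ≤ p.toFun (Matrix.single i i (star x)) * p.toFun X
            * p.toFun (Matrix.single j j (star x * x)) := by
            refine mul_le_mul_of_nonneg_right ?_ (p.nonneg _)
            exact p.mul_le' _ _
        _ = ‖x‖ * p.toFun X * (‖x‖ * ‖x‖) := by
            rw [p_diag, p_diag, norm_star, CStarRing.norm_star_mul_self]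
    rw [p_stdB, hnorm] at hle
    have hxpos : 0 < ‖x‖ := norm_pos_iff.mpr h0
    have h6 : ‖x‖ * ‖x‖ ^ 3 ≤ p.toFun X * ‖x‖ ^ 3 := by nlinarith [hle]
    exact le_of_mul_le_mul_right h6 (by positivity)

end MatrixCNorm

section Complete

variable {B : Type*} [NonUnitalCStarAlgebra B] {n : ℕ}
  (p : CNorm (Matrix (Fin n) (Fin n) B))

open Filter Topology CNorm CNorm.Syn

lemma syn_complete : CompleteSpace (CNorm.Syn p) := by
  refine Metric.complete_of_cauchySeq_tendsto fun u hu => ?_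
  have huc : ∀ (i j : Fin n), UniformContinuous
      (fun Y : CNorm.Syn p => ((Syn.mk p).symm Y) i j) := by
    intro i j
    refine LipschitzWith.uniformContinuous (LipschitzWith.of_dist_le_mul (K := 1) fun Y Z => ?_)
    rw [NNReal.coe_one, one_mul, dist_eq_norm, dist_eq_norm]
    have h := entry_le_p p ((Syn.mk p).symm Y - (Syn.mk p).symm Z) i j
    rw [Matrix.sub_apply] at h
    exact le_trans h (le_of_eq (Syn.norm_def p (Y - Z)).symm)
  have hC : ∀ i j, ∃ b : B,
      Tendsto (fun m => ((Syn.mk p).symm (u m)) i j) atTop (𝓝 b) :=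
    fun i j => cauchySeq_tendsto_of_complete ((huc i j).comp_cauchySeq hu)
  choose L hL using hC
  refine ⟨Syn.mk p (Matrix.of L), ?_⟩
  rw [tendsto_iff_dist_tendsto_zero]
  have hsum : Tendsto
      (fun m => ∑ i : Fin n, ∑ j : Fin n, ‖((Syn.mk p).symm (u m)) i j - L i j‖)
      atTop (𝓝 0) := by
    have h1 := tendsto_finset_sum (Finset.univ (α := Fin n))
      (fun i (_ : i ∈ Finset.univ) => tendsto_finset_sum (Finset.univ (α := Fin n))
        (fun j (_ : j ∈ Finset.univ) => (((hL i j).sub tendsto_const_nhds).norm :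
          Tendsto (fun m => ‖((Syn.mk p).symm (u m)) i j - L i j‖) atTop
            (𝓝 ‖L i j - L i j‖))))
    simpa using h1
  refine squeeze_zero (fun m => dist_nonneg) (fun m => ?_) hsum
  rw [dist_eq_norm]
  have h2 := p_le_sum p ((Syn.mk p).symm (u m) - Matrix.of L)
  refine le_trans (le_of_eq (Syn.norm_def p _)) (le_trans h2 (le_of_eq ?_))
  refine Finset.sum_congr rfl fun i _ => Finset.sum_congr rfl fun j _ => ?_
  rw [Matrix.sub_apply]
  rfl

end Complete

section Sup

variable {B : Type*} [NonUnitalCStarAlgebra B] (A : Submodule ℂ B) {n : ℕ}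
  (p : CNorm (Matrix (Fin n) (Fin n) B))

/-- The set of values `p (X C)` over admissible columns `C`. -/
def sSet (X : Matrix (Fin n) (Fin n) B) : Set ℝ :=
  {r : ℝ | ∃ C : Fin n → B, (∀ i, C i ∈ A) ∧ p.toFun (colMatrix C) ≤ 1 ∧
    r = p.toFun (colMatrix (X.mulVec C))}

/-- The candidate norm: sup over admissible columns. -/
noncomputable def sFun (X : Matrix (Fin n) (Fin n) B) : ℝ := sSup (sSet A p X)

variable {A p}

lemma zero_mem_sSet (X : Matrix (Fin n) (Fin n) B) : (0 : ℝ) ∈ sSet A p X :=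
  ⟨0, fun _ => A.zero_mem, by rw [colMatrix_zero, p.map_zero]; exact zero_le_one,
    by rw [Matrix.mulVec_zero, colMatrix_zero, p.map_zero]⟩

lemma sSet_le (X : Matrix (Fin n) (Fin n) B) : ∀ r ∈ sSet A p X, r ≤ p.toFun X := by
  rintro r ⟨C, hC, h1, rfl⟩
  rw [← mul_colMatrix]
  calc p.toFun (X * colMatrix C) ≤ p.toFun X * p.toFun (colMatrix C) := p.mul_le' _ _
    _ ≤ p.toFun X * 1 := mul_le_mul_of_nonneg_left h1 (p.nonneg X)
    _ = p.toFun X := mul_one _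

lemma sSet_bddAbove (X : Matrix (Fin n) (Fin n) B) : BddAbove (sSet A p X) :=
  ⟨p.toFun X, sSet_le X⟩

lemma le_sFun (X : Matrix (Fin n) (Fin n) B) {r : ℝ} (h : r ∈ sSet A p X) : r ≤ sFun A p X :=
  le_csSup (sSet_bddAbove X) h

lemma sFun_nonneg (X : Matrix (Fin n) (Fin n) B) : 0 ≤ sFun A p X :=
  le_sFun X (zero_mem_sSet X)

lemma sFun_le (X : Matrix (Fin n) (Fin n) B) : sFun A p X ≤ p.toFun X :=
  Real.sSup_le (sSet_le X) (p.nonneg X)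

/-- Key scaling estimate. -/
lemma p_mulVec_le (hn : 0 < n) (X : Matrix (Fin n) (Fin n) B) (C : Fin n → B)
    (hC : ∀ i, C i ∈ A) :
    p.toFun (colMatrix (X.mulVec C)) ≤ sFun A p X * p.toFun (colMatrix C) := by
  by_cases h0 : p.toFun (colMatrix C) = 0
  · have hC0 : C = 0 := colMatrix_eq_zero hn ((p.eq_zero' _).mp h0)
    rw [hC0, Matrix.mulVec_zero, colMatrix_zero, p.map_zero]
    simp
  · set t := p.toFun (colMatrix C) with ht
    have htpos : 0 < t := lt_of_le_of_ne (p.nonneg _) (Ne.symm h0)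
    set C' : Fin n → B := ((t⁻¹ : ℝ) : ℂ) • C with hC'
    have hC'mem : ∀ i, C' i ∈ A := fun i => A.smul_mem _ (hC i)
    have hnormC' : p.toFun (colMatrix C') = 1 := by
      rw [hC', colMatrix_smul, p.smul', Complex.norm_real, Real.norm_eq_abs,
        abs_of_pos (inv_pos.mpr htpos), ← ht, inv_mul_cancel₀ (ne_of_gt htpos)]
    have hmem : p.toFun (colMatrix (X.mulVec C')) ∈ sSet A p X :=
      ⟨C', hC'mem, le_of_eq hnormC', rfl⟩
    have hle := le_sFun X hmem
    have heq : p.toFun (colMatrix (X.mulVec C')) = t⁻¹ * p.toFun (colMatrix (X.mulVec C)) := by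
      rw [hC', Matrix.mulVec_smul, colMatrix_smul, p.smul', Complex.norm_real,
        Real.norm_eq_abs, abs_of_pos (inv_pos.mpr htpos)]
    rw [heq] at hle
    calc p.toFun (colMatrix (X.mulVec C))
        = t * (t⁻¹ * p.toFun (colMatrix (X.mulVec C))) := by
          field_simp
      _ ≤ t * sFun A p X := mul_le_mul_of_nonneg_left hle (le_of_lt htpos)
      _ = sFun A p X * t := mul_comm _ _

lemma sFun_add_le (X Y : Matrix (Fin n) (Fin n) B) :
    sFun A p (X + Y) ≤ sFun A p X + sFun A p Y := by
  refine Real.sSup_le ?_ (add_nonneg (sFun_nonneg X) (sFun_nonneg Y))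
  rintro r ⟨C, hC, h1, rfl⟩
  rw [Matrix.add_mulVec, colMatrix_add]
  calc p.toFun (colMatrix (X.mulVec C) + colMatrix (Y.mulVec C))
      ≤ p.toFun (colMatrix (X.mulVec C)) + p.toFun (colMatrix (Y.mulVec C)) := p.add_le' _ _
    _ ≤ sFun A p X + sFun A p Y :=
        add_le_add (le_sFun X ⟨C, hC, h1, rfl⟩) (le_sFun Y ⟨C, hC, h1, rfl⟩)

lemma sFun_smul_le (c : ℂ) (X : Matrix (Fin n) (Fin n) B) :
    sFun A p (c • X) ≤ ‖c‖ * sFun A p X := by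
  refine Real.sSup_le ?_ (mul_nonneg (norm_nonneg c) (sFun_nonneg X))
  rintro r ⟨C, hC, h1, rfl⟩
  rw [Matrix.smul_mulVec, colMatrix_smul, p.smul']
  exact mul_le_mul_of_nonneg_left (le_sFun X ⟨C, hC, h1, rfl⟩) (norm_nonneg c)

lemma sFun_smul (c : ℂ) (X : Matrix (Fin n) (Fin n) B) :
    sFun A p (c • X) = ‖c‖ * sFun A p X := by
  rcases eq_or_ne c 0 with hc | hc
  · rw [hc, norm_zero, zero_mul, zero_smul]
    refine le_antisymm (Real.sSup_le ?_ le_rfl) (sFun_nonneg 0)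
    rintro r ⟨C, hC, h1, rfl⟩
    rw [Matrix.zero_mulVec, colMatrix_zero, p.map_zero]
  · refine le_antisymm (sFun_smul_le c X) ?_
    have h := sFun_smul_le (A := A) (p := p) c⁻¹ (c • X)
    rw [inv_smul_smul₀ hc] at h
    rw [norm_inv] at h
    have hcpos : 0 < ‖c‖ := norm_pos_iff.mpr hc
    calc ‖c‖ * sFun A p X ≤ ‖c‖ * (‖c‖⁻¹ * sFun A p (c • X)) :=
          mul_le_mul_of_nonneg_left h (norm_nonneg c)
      _ = ‖c‖ * ‖c‖⁻¹ * sFun A p (c • X) := by ring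
      _ = sFun A p (c • X) := by rw [mul_inv_cancel₀ (ne_of_gt hcpos), one_mul]

lemma sFun_mul_le (hn : 0 < n)
    (hAl : ∀ b : B, ∀ x ∈ A, b * x ∈ A)
    (X Y : Matrix (Fin n) (Fin n) B) :
    sFun A p (X * Y) ≤ sFun A p X * sFun A p Y := by
  refine Real.sSup_le ?_ (mul_nonneg (sFun_nonneg X) (sFun_nonneg Y))
  rintro r ⟨C, hC, h1, rfl⟩
  have hmem : ∀ j, (Y.mulVec C) j ∈ A := by
    intro j
    have : Y.mulVec C j = ∑ k, Y j k * C k := by simp [Matrix.mulVec, dotProduct]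
    rw [this]
    exact Submodule.sum_mem A fun k _ => hAl (Y j k) (C k) (hC k)
  rw [← Matrix.mulVec_mulVec]
  calc p.toFun (colMatrix (X.mulVec (Y.mulVec C)))
      ≤ sFun A p X * p.toFun (colMatrix (Y.mulVec C)) := p_mulVec_le hn X _ hmem
    _ ≤ sFun A p X * sFun A p Y :=
        mul_le_mul_of_nonneg_left (le_sFun Y ⟨C, hC, h1, rfl⟩) (sFun_nonneg X)

lemma sFun_eq_zero (hn : 0 < n)
    (hess : ∀ b : B, (∀ x ∈ A, b * x = 0) → b = 0)
    (X : Matrix (Fin n) (Fin n) B) (h : sFun A p X = 0) : X = 0 := by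
  have hvec : ∀ C : Fin n → B, (∀ i, C i ∈ A) → X.mulVec C = 0 := by
    intro C hC
    have h1 := p_mulVec_le (A := A) (p := p) hn X C hC
    rw [h, zero_mul] at h1
    have h2 : p.toFun (colMatrix (X.mulVec C)) = 0 := le_antisymm h1 (p.nonneg _)
    exact colMatrix_eq_zero hn ((p.eq_zero' _).mp h2)
  ext i j
  rw [Matrix.zero_apply]
  refine hess (X i j) fun a ha => ?_
  have hsingle : ∀ k, (Pi.single j a : Fin n → B) k ∈ A := by
    intro k
    rcases eq_or_ne k j with hk | hk
    · rw [hk, Pi.single_eq_same]; exact ha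
    · rw [Pi.single_eq_of_ne hk]; exact A.zero_mem
  have := hvec (Pi.single j a : Fin n → B) hsingle
  rw [Matrix.mulVec_single] at this
  exact congrFun this i

lemma sFun_sq_le (hn : 0 < n) (X : Matrix (Fin n) (Fin n) B) :
    sFun A p X ^ 2 ≤ sFun A p (star X * X) := by
  have key : ∀ r ∈ sSet A p X, r ≤ Real.sqrt (sFun A p (star X * X)) := by
    rintro r ⟨C, hC, h1, rfl⟩
    have hcol : colMatrix (X.mulVec C) = X * colMatrix C := (mul_colMatrix X C).symm
    have hsq := p.cstar' (colMatrix (X.mulVec C))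
    have hrw : star (colMatrix (X.mulVec C)) * colMatrix (X.mulVec C)
        = star (colMatrix C) * colMatrix ((star X * X).mulVec C) := by
      rw [hcol, star_mul, ← mul_colMatrix, mul_assoc, ← mul_assoc (star X) X (colMatrix C),
        mul_colMatrix]
    rw [hrw] at hsq
    have hle : p.toFun (colMatrix (X.mulVec C)) ^ 2 ≤ sFun A p (star X * X) := by
      rw [← hsq]
      calc p.toFun (star (colMatrix C) * colMatrix ((star X * X).mulVec C))
          ≤ p.toFun (star (colMatrix C)) * p.toFun (colMatrix ((star X * X).mulVec C)) :=
            p.mul_le' _ _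
        _ = p.toFun (colMatrix C) * p.toFun (colMatrix ((star X * X).mulVec C)) := by
            rw [p.map_star]
        _ ≤ 1 * sFun A p (star X * X) := by
            refine mul_le_mul h1 (le_sFun _ ⟨C, hC, h1, rfl⟩) (p.nonneg _) zero_le_one
        _ = sFun A p (star X * X) := one_mul _
    have hnn := p.nonneg (colMatrix (X.mulVec C))
    rw [← Real.sqrt_sq hnn]
    exact Real.sqrt_le_sqrt hle
  have h2 : sFun A p X ≤ Real.sqrt (sFun A p (star X * X)) :=
    Real.sSup_le key (Real.sqrt_nonneg _)
  calc sFun A p X ^ 2 ≤ Real.sqrt (sFun A p (star X * X)) ^ 2 := by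
        refine pow_le_pow_left₀ (sFun_nonneg X) h2 2
    _ = sFun A p (star X * X) := Real.sq_sqrt (sFun_nonneg _)

lemma sFun_star (hn : 0 < n) (hAl : ∀ b : B, ∀ x ∈ A, b * x ∈ A)
    (X : Matrix (Fin n) (Fin n) B) : sFun A p (star X) = sFun A p X := by
  have key : ∀ Y : Matrix (Fin n) (Fin n) B, sFun A p Y ≤ sFun A p (star Y) := by
    intro Y
    have h1 := sFun_sq_le (A := A) (p := p) hn Y
    have h2 := sFun_mul_le (A := A) (p := p) hn hAl (star Y) Y
    rcases eq_or_lt_of_le (sFun_nonneg (A := A) (p := p) Y) with h0 | h0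
    · rw [← h0]; exact sFun_nonneg _
    · have := le_trans h1 h2
      rw [pow_two] at this
      exact le_of_mul_le_mul_right this h0
  have h3 := key X
  have h4 := key (star X)
  rw [star_star] at h4
  exact le_antisymm h4 h3

lemma sFun_cstar (hn : 0 < n) (hAl : ∀ b : B, ∀ x ∈ A, b * x ∈ A)
    (X : Matrix (Fin n) (Fin n) B) : sFun A p (star X * X) = sFun A p X ^ 2 := by
  refine le_antisymm ?_ (sFun_sq_le hn X)
  calc sFun A p (star X * X) ≤ sFun A p (star X) * sFun A p X := sFun_mul_le hn hAl _ _
    _ = sFun A p X ^ 2 := by rw [sFun_star hn hAl, pow_two]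

end Sup


lemma sFun_zero {B : Type*} [NonUnitalCStarAlgebra B] {A : Submodule ℂ B} {n : ℕ}
    {p : CNorm (Matrix (Fin n) (Fin n) B)} : sFun A p (0 : Matrix (Fin n) (Fin n) B) = 0 := by
  have h := sFun_smul (A := A) (p := p) 0 0
  simpa using h

/-- Let `B` be a C*-algebra and `A ⊆ B` an essential closed two-sided ideal of `B`.  Then for
every `n ≥ 1` and every `X ∈ Mₙ(B)`,
`‖X‖ = sup { ‖XC‖ : C an n×1 column with entries in A, ‖C‖ ≤ 1 }`, where columns are normed
via their embedding into `Mₙ(B)` and all matrix norms are the canonical C*-norms. -/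
theorem norm_eq_sup_column_of_essential
    {B : Type*} [NonUnitalCStarAlgebra B]
    (A : Submodule ℂ B)
    (hAc : IsClosed (A : Set B))
    (hAl : ∀ b : B, ∀ x ∈ A, b * x ∈ A)
    (hAr : ∀ x ∈ A, ∀ b : B, x * b ∈ A)
    (hess : ∀ b : B, (∀ x ∈ A, b * x = 0) → b = 0)
    (N : ∀ n : ℕ, Matrix (Fin n) (Fin n) B → ℝ)
    (hN : ∀ n : ℕ, IsCStarNorm (N n)) :
    ∀ n : ℕ, 0 < n → ∀ X : Matrix (Fin n) (Fin n) B,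
      N n X = sSup {r : ℝ | ∃ C : Fin n → B, (∀ i, C i ∈ A) ∧
        N n (colMatrix C) ≤ 1 ∧ r = N n (colMatrix (X.mulVec C))} := by
  intro n hn X
  obtain ⟨h1, h2, h3, h4, h5⟩ := hN n
  let p : CNorm (Matrix (Fin n) (Fin n) B) := ⟨N n, h1, h2, h3, h4, h5⟩
  letI : CompleteSpace (CNorm.Syn p) := syn_complete p
  letI : NonUnitalCStarAlgebra (CNorm.Syn p) := {}
  let q : CNorm (CNorm.Syn p) :=
    { toFun := fun Y => sFun A p ((CNorm.Syn.mk p).symm Y)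
      add_le' := fun x y => sFun_add_le _ _
      smul' := fun c x => sFun_smul c _
      eq_zero' := fun x =>
        ⟨fun h => sFun_eq_zero hn hess _ h, fun h => by rw [h]; exact sFun_zero⟩
      mul_le' := fun x y => sFun_mul_le hn hAl _ _
      cstar' := fun x => sFun_cstar hn hAl _ }
  have key := q.eq_norm (CNorm.Syn.mk p X)
  have key2 : sFun A p X = p.toFun X := key.trans (CNorm.Syn.norm_def p _)
  exact key2.symm
end

section
/- Let A be a C*-algebra, J a closed left ideal in A, and (u_β) a contractive approximate identity of the closed two-sided ideal JJ*. Then J is an essential left ideal in A if and only if ‖a‖ = sup_β ‖a u_β‖ for all a ∈ A. -/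
/-- `e` is a contractive (two-sided) approximate identity of the closed two-sided ideal `K`:
an increasing net of positive elements of `K` of norm at most one, with
`lim_β k * e_β = k = lim_β e_β * k` for every `k ∈ K`. -/
def IsContractiveApproxUnit {A : Type*} [NonUnitalCStarAlgebra A]
    [PartialOrder A] [StarOrderedRing A]
    {ι : Type*} [Nonempty ι] [SemilatticeSup ι]
    (K : Submodule ℂ A) (e : ι → A) : Prop :=
  Monotone e ∧ (∀ i, 0 ≤ e i) ∧ (∀ i, e i ∈ K) ∧ (∀ i, ‖e i‖ ≤ 1) ∧
    (∀ k ∈ K, Filter.Tendsto (fun i => k * e i) Filter.atTop (nhds k)) ∧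
    (∀ k ∈ K, Filter.Tendsto (fun i => e i * k) Filter.atTop (nhds k))

open Filter Topology

section

variable {A : Type*} [NonUnitalCStarAlgebra A]

lemma sq_norm_sub_mul_le {e : A} (he : IsSelfAdjoint e) (he1 : ‖e‖ ≤ 1) (x : A) :
    ‖x - e * x‖ ^ 2 ≤ 2 * ‖x * star x - e * (x * star x)‖ := by
  set r := x * star x - e * (x * star x)
  have hexpand : (x - e * x) * star (x - e * x) = r - r * e := by
    simp only [r, star_sub, star_mul, he.star_eq]
    noncomm_ring
  calc ‖x - e * x‖ ^ 2 = ‖r - r * e‖ := by rw [← hexpand, CStarRing.norm_self_mul_star, sq]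
    _ ≤ ‖r‖ + ‖r‖ * ‖e‖ := (norm_sub_le _ _).trans (add_le_add le_rfl (norm_mul_le _ _))
    _ ≤ 2 * ‖r‖ := by nlinarith [norm_nonneg r]

lemma tendsto_mul_of_tendsto_mul_mul_star {ι : Type*} {l : Filter ι} {e : ι → A}
    (he : ∀ i, IsSelfAdjoint (e i)) (he1 : ∀ i, ‖e i‖ ≤ 1) {x : A}
    (hx : Tendsto (fun i => e i * (x * star x)) l (𝓝 (x * star x))) :
    Tendsto (fun i => e i * x) l (𝓝 x) := by
  have hsq : Tendsto (fun i => ‖x - e i * x‖ ^ 2) l (𝓝 0) := by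
    refine squeeze_zero (fun _ => sq_nonneg _) (fun i => sq_norm_sub_mul_le (he i) (he1 i) x) ?_
    simpa using ((tendsto_iff_norm_sub_tendsto_zero.mp hx).const_mul 2).congr
      fun i => by rw [norm_sub_rev]
  have hnorm : Tendsto (fun i => ‖x - e i * x‖) l (𝓝 0) := by
    simpa [Function.comp_def] using (Real.continuous_sqrt.tendsto 0).comp hsq
  rw [tendsto_iff_norm_sub_tendsto_zero]
  simpa [norm_sub_rev] using hnorm

lemma mul_mem_mulSpan {S T : Set A} {s t : A} (hs : s ∈ S) (ht : t ∈ T) :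
    s * t ∈ mulSpan S T :=
  Submodule.le_topologicalClosure _ (Submodule.subset_span (Set.mem_image2_of_mem hs ht))

lemma mul_eq_zero_of_mem_mulSpan {S T : Set A} {a x : A} (ha : ∀ s ∈ S, a * s = 0)
    (hx : x ∈ mulSpan S T) : a * x = 0 := by
  have hker : mulSpan S T ≤ LinearMap.ker (ContinuousLinearMap.mul ℂ A a : A →ₗ[ℂ] A) := by
    refine Submodule.topologicalClosure_minimal _ ?_ (ContinuousLinearMap.isClosed_ker _)
    rw [Submodule.span_le]
    rintro - ⟨s, hs, t, -, rfl⟩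
    simp [← mul_assoc, ha s hs]
  simpa using hker hx

lemma norm_mul_le_of_norm_le_one (a : A) {e : A} (he : ‖e‖ ≤ 1) : ‖a * e‖ ≤ ‖a‖ :=
  (norm_mul_le _ _).trans (mul_le_of_le_one_right (norm_nonneg a) he)

lemma iSup_norm_mul_le_norm {ι : Type*} [Nonempty ι] {u : ι → A} (hu1 : ∀ i, ‖u i‖ ≤ 1)
    (a : A) : ⨆ i, ‖a * u i‖ ≤ ‖a‖ :=
  ciSup_le fun i => norm_mul_le_of_norm_le_one a (hu1 i)

lemma norm_mul_le_iSup_norm_mul_mul {ι : Type*} {u : ι → A} (hu1 : ∀ i, ‖u i‖ ≤ 1) (a : A)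
    {l : Filter ι} [l.NeBot] {j : A} (hj : Tendsto (fun i => u i * j) l (𝓝 j)) :
    ‖a * j‖ ≤ (⨆ i, ‖a * u i‖) * ‖j‖ := by
  have hbdd : BddAbove (Set.range fun i => ‖a * u i‖) :=
    ⟨‖a‖, Set.forall_mem_range.mpr fun i => norm_mul_le_of_norm_le_one a (hu1 i)⟩
  refine le_of_tendsto (hj.const_mul a).norm (Eventually.of_forall fun i => ?_)
  calc ‖a * (u i * j)‖ ≤ ‖a * u i‖ * ‖j‖ := by rw [← mul_assoc]; exact norm_mul_le _ _
    _ ≤ (⨆ i, ‖a * u i‖) * ‖j‖ := by gcongr; exact le_ciSup hbdd i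

section StarOrdered

variable [PartialOrder A] [StarOrderedRing A]

/-- The positive part `(c - t)₊`, formed without a unit. -/
noncomputable def posPartSub (t : ℝ) (c : A) : A :=
  cfcₙ (fun r : ℝ => max (r - t) 0) c

lemma smul_posPartSub_mul_self_le {c : A} (hc : 0 ≤ c) {t : ℝ} (ht : 0 ≤ t) :
    t • (posPartSub t c * posPartSub t c) ≤ posPartSub t c * c * posPartSub t c := by
  have hc_sa : IsSelfAdjoint c := IsSelfAdjoint.of_nonneg hc
  have hf0 : max ((0 : ℝ) - t) 0 = 0 := by simp [ht]
  have hright : posPartSub t c * c * posPartSub t c =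
      cfcₙ (fun r : ℝ => max (r - t) 0 * r * max (r - t) 0) c := by
    rw [posPartSub, cfcₙ_mul (fun r : ℝ => max (r - t) 0 * r) (fun r : ℝ => max (r - t) 0) c,
      cfcₙ_mul (fun r : ℝ => max (r - t) 0) (fun r : ℝ => r) c, cfcₙ_id' ℝ c]
  have hleft : t • (posPartSub t c * posPartSub t c) =
      cfcₙ (fun r : ℝ => t * (max (r - t) 0 * max (r - t) 0)) c := by
    rw [posPartSub, cfcₙ_const_mul t (fun r : ℝ => max (r - t) 0 * max (r - t) 0) c,
      cfcₙ_mul (fun r : ℝ => max (r - t) 0) (fun r : ℝ => max (r - t) 0) c]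
  rw [hleft, hright]
  refine cfcₙ_mono (fun r _ => ?_)
  rcases le_or_gt r t with h | h
  · simp [max_eq_right (sub_nonpos.mpr h)]
  · rw [max_eq_left (sub_pos.mpr h).le]
    nlinarith

lemma mul_sq_norm_posPartSub_mul_le (a x : A) {t : ℝ} (ht : 0 ≤ t) :
    t * ‖posPartSub t (star a * a) * x‖ ^ 2 ≤ ‖a * (posPartSub t (star a * a) * x)‖ ^ 2 := by
  set d := posPartSub t (star a * a)
  have hd_sa : IsSelfAdjoint d := IsSelfAdjoint.of_nonneg (cfcₙ_nonneg fun _ _ => le_max_right _ _)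
  have hle := star_left_conjugate_le_conjugate
    (smul_posPartSub_mul_self_le (star_mul_self_nonneg a) ht) x
  have hleft : star x * (t • (d * d)) * x = t • (star (d * x) * (d * x)) := by
    simp only [star_mul, hd_sa.star_eq, smul_mul_assoc, mul_smul_comm, mul_assoc]
  have hright : star x * (d * (star a * a) * d) * x = star (a * (d * x)) * (a * (d * x)) := by
    simp only [star_mul, hd_sa.star_eq, mul_assoc]
  rw [hleft, hright] at hle
  have hnorm := CStarAlgebra.norm_le_norm_of_nonneg_of_le
    (smul_nonneg ht (star_mul_self_nonneg _)) hle
  rw [norm_smul, Real.norm_of_nonneg ht, CStarRing.norm_star_mul_self,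
    CStarRing.norm_star_mul_self] at hnorm
  nlinarith

lemma norm_le_of_posPartSub_eq_zero {c : A} (hc : 0 ≤ c) {t : ℝ} (ht : 0 ≤ t)
    (h : posPartSub t c = 0) : ‖c‖ ≤ t := by
  have hvanish : (quasispectrum ℝ c).EqOn (fun r => max (r - t) 0) (fun _ => 0) :=
    eqOn_of_cfcₙ_eq_cfcₙ (h.trans (cfcₙ_const_zero ℝ c).symm) (hf0 := by simp [ht])
  rw [← cfcₙ_id' ℝ c]
  refine norm_cfcₙ_le fun r hr => ?_
  rw [Real.norm_of_nonneg (quasispectrum_nonneg_of_nonneg c hc r hr)]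
  simpa using hvanish hr

lemma norm_le_of_essential {J : Set A} (hJl : ∀ a : A, ∀ x ∈ J, a * x ∈ J)
    (hess : ∀ a : A, (∀ j ∈ J, a * j = 0) → a = 0)
    {a : A} {s : ℝ} (hs : 0 ≤ s) (hle : ∀ j ∈ J, ‖a * j‖ ≤ s * ‖j‖) : ‖a‖ ≤ s := by
  suffices ‖a‖ ^ 2 ≤ s ^ 2 from (sq_le_sq₀ (norm_nonneg a) hs).mp this
  refine le_of_forall_gt_imp_ge_of_dense fun t hst => ?_
  have ht : 0 ≤ t := (sq_nonneg s).trans hst.le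
  -- `(a⋆a - t)₊` annihilates `J`: on its range `a` is bounded below by `√t > s`.
  have hann : ∀ j ∈ J, posPartSub t (star a * a) * j = 0 := by
    intro j hj
    set y := posPartSub t (star a * a) * j
    have hlow := mul_sq_norm_posPartSub_mul_le a j ht
    have hup : ‖a * y‖ ≤ s * ‖y‖ := hle y (hJl _ j hj)
    have hy : ‖y‖ ^ 2 * (t - s ^ 2) ≤ 0 := by
      nlinarith [norm_nonneg (a * y), mul_nonneg hs (norm_nonneg y)]
    have : ‖y‖ ^ 2 ≤ 0 := nonpos_of_mul_nonpos_left hy (sub_pos.mpr hst)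
    exact norm_eq_zero.mp (pow_eq_zero_iff two_ne_zero |>.mp (le_antisymm this (sq_nonneg _)))
  calc ‖a‖ ^ 2 = ‖star a * a‖ := by rw [CStarRing.norm_star_mul_self, sq]
    _ ≤ t := norm_le_of_posPartSub_eq_zero (star_mul_self_nonneg a) ht (hess _ hann)

end StarOrdered

end

theorem essential_iff_norm_eq_sup_JJstar_approx_unit_general
    {A : Type*} [NonUnitalCStarAlgebra A] [PartialOrder A] [StarOrderedRing A]
    {ι : Type*} [Nonempty ι] [SemilatticeSup ι]
    (J : Submodule ℂ A)
    (hJl : ∀ a : A, ∀ x ∈ J, a * x ∈ J)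
    (u : ι → A)
    (hu : IsContractiveApproxUnit (mulSpan (J : Set A) (star '' (J : Set A))) u) :
    (∀ a : A, (∀ j ∈ J, a * j = 0) → a = 0) ↔
    (∀ a : A, ‖a‖ = ⨆ β : ι, ‖a * u β‖) := by
  obtain ⟨-, hpos, hmem, hu1, -, hleft⟩ := hu
  have htends : ∀ j ∈ J, Tendsto (fun β => u β * j) atTop (𝓝 j) := fun j hj =>
    tendsto_mul_of_tendsto_mul_mul_star (fun β => IsSelfAdjoint.of_nonneg (hpos β)) hu1
      (hleft _ (mul_mem_mulSpan hj ⟨j, hj, rfl⟩))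
  constructor
  · intro hess a
    refine le_antisymm ?_ (iSup_norm_mul_le_norm hu1 a)
    exact norm_le_of_essential hJl hess (Real.iSup_nonneg fun _ => norm_nonneg _)
      fun j hj => norm_mul_le_iSup_norm_mul_mul hu1 a (htends j hj)
  · intro hnorm a ha
    rw [← norm_eq_zero, hnorm a]
    simp [mul_eq_zero_of_mem_mulSpan ha (hmem _)]

/-- Let `A` be a C*-algebra, `J` a closed left ideal in `A`, and `(u_β)` a contractive
approximate identity of the closed two-sided ideal `JJ*`.  Then `J` is an essential left
ideal in `A` (i.e. `aJ = {0}` implies `a = 0`) if and only if `‖a‖ = sup_β ‖a u_β‖` for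
all `a ∈ A`. -/
theorem essential_iff_norm_eq_sup_JJstar_approx_unit
    {A : Type*} [NonUnitalCStarAlgebra A] [PartialOrder A] [StarOrderedRing A]
    {ι : Type*} [Nonempty ι] [SemilatticeSup ι]
    (J : Submodule ℂ A)
    (hJc : IsClosed (J : Set A))
    (hJl : ∀ a : A, ∀ x ∈ J, a * x ∈ J)
    (u : ι → A)
    (hu : IsContractiveApproxUnit (mulSpan (J : Set A) (star '' (J : Set A))) u) :
    (∀ a : A, (∀ j ∈ J, a * j = 0) → a = 0) ↔
    (∀ a : A, ‖a‖ = ⨆ β : ι, ‖a * u β‖) :=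
  essential_iff_norm_eq_sup_JJstar_approx_unit_general J hJl u hu
end
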